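/- Let n ≥ 2, α ∈ (1/2, 1], and γ = n^{α−1}. Let A be a (deterministic) symmetric n×n matrix with entries in [0,1] and zero diagonal, with degree matrix D (diagonal, D_{ii} = Σ_j A_{ij}). Let Â be a random symmetric n×n matrix whose entries Â_{ij} = Â_{ji} for i < j are independent Bernoulli random variables with success probabilities γ·A_{ij}, and Â_{ii} = 0; let D̂ be its degree matrix (diagonal, D̂_{ii} = Σ_j Â_{ij}). Then for every τ > 0, with probability at least 1 − 2·n·e^{−τ²/(1+τ)}: |D_{ii} − (1/γ)·D̂_{ii}| ≤ 2·n^{1−α/2}·τ for every i ∈ {1, …, n}. -/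

import Mathlib

open MeasureTheory

/-- Bernoulli measure on `Bool` with success probability `p`. -/
noncomputable def bern (p : ℝ) : Measure Bool :=
  ENNReal.ofReal (1 - p) • Measure.dirac false + ENNReal.ofReal p • Measure.dirac true

/-- The law of the independent edge indicators of the subsampled graph: each edge
`{i, j}` with `i < j` is present independently with probability `γ · A i j`. -/
noncomputable def edgeMeasure {n : ℕ} (A : Matrix (Fin n) (Fin n) ℝ) (γ : ℝ) :
    Measure ({q : Fin n × Fin n // q.1 < q.2} → Bool) :=
  Measure.pi fun q => bern (γ * A q.1.1 q.1.2)

/-- The (symmetric, zero-diagonal) adjacency matrix built from the edge indicators. -/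
noncomputable def hatA {n : ℕ} (e : {q : Fin n × Fin n // q.1 < q.2} → Bool) :
    Matrix (Fin n) (Fin n) ℝ :=
  Matrix.of fun i j =>
    if h : i < j then (if e ⟨(i, j), h⟩ then 1 else 0)
    else if h' : j < i then (if e ⟨(j, i), h'⟩ then 1 else 0)
    else 0

open ProbabilityTheory Real Finset

/-! The scaled degree `γ D_i` is the mean of `D̂_i`, a sum of independent Bernoulli variables
over the edges at `i`, and it is at most `γ n = s²` with `s = n^{α/2}`. The Chernoff bound with
parameter `λ ∈ [0, 1]`, together with `e^{±λ} - 1 ∓ λ ≤ λ²`, bounds each tail of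
`|D̂_i - γ D_i| > 2sτ` by `exp (λ² s² - 2λsτ)`, and the choice `λ = τ / ((1 + τ) s)` makes this
at most `exp (-τ² / (1 + τ))`. A union bound over the `n` vertices and the two tails concludes. -/

lemma isProbabilityMeasure_bern {p : ℝ} (h0 : 0 ≤ p) (h1 : p ≤ 1) :
    IsProbabilityMeasure (bern p) := by
  constructor
  simp only [bern, Measure.add_apply, Measure.smul_apply, measure_univ, smul_eq_mul, mul_one]
  rw [← ENNReal.ofReal_add (by linarith) h0]
  norm_num

lemma integral_bern {p : ℝ} (h0 : 0 ≤ p) (h1 : p ≤ 1) (f : Bool → ℝ) :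
    ∫ x, f x ∂bern p = (1 - p) * f false + p * f true := by
  rw [bern, integral_add_measure (Integrable.of_finite.smul_measure (by simp))
      (Integrable.of_finite.smul_measure (by simp)),
    integral_smul_measure, integral_smul_measure, integral_dirac, integral_dirac,
    ENNReal.toReal_ofReal (by linarith), ENNReal.toReal_ofReal h0, smul_eq_mul, smul_eq_mul]

lemma mgf_bern_le {p : ℝ} (h0 : 0 ≤ p) (h1 : p ≤ 1) (s : ℝ) :
    mgf (fun x : Bool => if x then (1 : ℝ) else 0) (bern p) s ≤ exp ((exp s - 1) * p) := by
  rw [mgf, integral_bern h0 h1]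
  simp only [mul_one, mul_zero, exp_zero, ite_true, Bool.false_eq_true, ite_false]
  linarith [add_one_le_exp ((exp s - 1) * p)]

section BernoulliSum

variable {ι : Type*} [Fintype ι] {p : ι → ℝ}

lemma mgf_sum_bern_le (hp : ∀ q, p q ∈ Set.Icc (0 : ℝ) 1) (S : Finset ι) (s : ℝ) :
    mgf (fun e : ι → Bool => ∑ q ∈ S, if e q then (1 : ℝ) else 0)
        (Measure.pi fun q => bern (p q)) s ≤ exp ((exp s - 1) * ∑ q ∈ S, p q) := by
  have := fun q => isProbabilityMeasure_bern (hp q).1 (hp q).2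
  have hindep := iIndepFun_pi (μ := fun q => bern (p q))
    (X := fun _ (x : Bool) => if x then (1 : ℝ) else 0) fun _ => Measurable.of_discrete.aemeasurable
  have hsum : (fun e : ι → Bool => ∑ q ∈ S, if e q then (1 : ℝ) else 0)
      = ∑ q ∈ S, fun e : ι → Bool => if e q then (1 : ℝ) else 0 := by
    ext e; simp only [Finset.sum_apply]
  rw [hsum, hindep.mgf_sum (fun _ => Measurable.of_discrete), mul_sum, exp_sum]
  refine prod_le_prod (fun q _ => mgf_nonneg) fun q _ => ?_
  calc mgf (fun e : ι → Bool => if e q then (1 : ℝ) else 0) (Measure.pi fun q => bern (p q)) s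
      = mgf (fun x : Bool => if x then (1 : ℝ) else 0) (bern (p q)) s := by
        rw [mgf, mgf, ← (measurePreserving_eval (fun q => bern (p q)) q).map_eq,
          integral_map (measurable_pi_apply q).aemeasurable
            Measurable.of_discrete.aestronglyMeasurable]
    _ ≤ _ := mgf_bern_le (hp q).1 (hp q).2 s

lemma exp_mul_mgf_sum_bern_le (hp : ∀ q, p q ∈ Set.Icc (0 : ℝ) 1) (S : Finset ι) {s : ℝ}
    (hs : |s| ≤ 1) (r : ℝ) :
    exp (-s * (∑ q ∈ S, p q + r)) *
        mgf (fun e : ι → Bool => ∑ q ∈ S, if e q then (1 : ℝ) else 0)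
          (Measure.pi fun q => bern (p q)) s
      ≤ exp (s ^ 2 * ∑ q ∈ S, p q - s * r) := by
  have hμ : 0 ≤ ∑ q ∈ S, p q := sum_nonneg fun q _ => (hp q).1
  calc _ ≤ exp (-s * (∑ q ∈ S, p q + r)) * exp ((exp s - 1) * ∑ q ∈ S, p q) := by
        gcongr; exact mgf_sum_bern_le hp S s
    _ = exp ((exp s - 1 - s) * ∑ q ∈ S, p q - s * r) := by rw [← exp_add]; ring_nf
    _ ≤ _ := by
        gcongr
        exact (abs_le.1 (abs_exp_sub_one_sub_id_le hs)).2

lemma measureReal_lt_abs_sum_bern_sub_le (hp : ∀ q, p q ∈ Set.Icc (0 : ℝ) 1) (S : Finset ι)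
    {l : ℝ} (hl0 : 0 ≤ l) (hl1 : l ≤ 1) (t : ℝ) :
    (Measure.pi fun q => bern (p q)).real
        {e | t < |∑ q ∈ S, (if e q then (1 : ℝ) else 0) - ∑ q ∈ S, p q|}
      ≤ 2 * exp (l ^ 2 * ∑ q ∈ S, p q - l * t) := by
  have := fun q => isProbabilityMeasure_bern (hp q).1 (hp q).2
  set X := fun e : ι → Bool => ∑ q ∈ S, if e q then (1 : ℝ) else 0
  set μ := ∑ q ∈ S, p q
  have htails : {e | t < |X e - μ|} ⊆ {e | μ + t ≤ X e} ∪ {e | X e ≤ μ + -t} := by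
    intro e he
    simp only [Set.mem_ofPred_eq, Set.mem_union] at he ⊢
    rcases lt_abs.1 he with h | h
    exacts [Or.inl (by linarith), Or.inr (by linarith)]
  have hl : |l| ≤ 1 := abs_le.2 ⟨by linarith, hl1⟩
  have hnl : |-l| ≤ 1 := by rwa [abs_neg]
  calc _ ≤ _ := measureReal_mono htails
    _ ≤ _ := measureReal_union_le _ _
    _ ≤ exp (l ^ 2 * μ - l * t) + exp ((-l) ^ 2 * μ - -l * -t) := by
        gcongr
        · exact (measure_ge_le_exp_mul_mgf _ hl0 Integrable.of_finite).trans
            (exp_mul_mgf_sum_bern_le hp S hl t)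
        · exact (measure_le_le_exp_mul_mgf _ (neg_nonpos.2 hl0) Integrable.of_finite).trans
            (exp_mul_mgf_sum_bern_le hp S hnl (-t))
    _ = _ := by ring_nf

lemma measureReal_two_mul_lt_abs_sum_bern_sub_le (hp : ∀ q, p q ∈ Set.Icc (0 : ℝ) 1)
    (S : Finset ι) {s τ : ℝ} (hs : 1 ≤ s) (hμ : ∑ q ∈ S, p q ≤ s ^ 2) (hτ : 0 < τ) :
    (Measure.pi fun q => bern (p q)).real
        {e | 2 * s * τ < |∑ q ∈ S, (if e q then (1 : ℝ) else 0) - ∑ q ∈ S, p q|}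
      ≤ 2 * exp (-(τ ^ 2) / (1 + τ)) := by
  set u := τ / (1 + τ)
  have hu0 : 0 ≤ u := by positivity
  have huτ : u ≤ τ := div_le_self hτ.le (by linarith)
  have hu1 : u ≤ 1 := div_le_one_of_le₀ (by linarith) (by linarith)
  refine (measureReal_lt_abs_sum_bern_sub_le hp S (l := u / s) (by positivity)
    ((div_le_one₀ (by linarith)).2 (hu1.trans hs)) _).trans ?_
  gcongr
  calc (u / s) ^ 2 * ∑ q ∈ S, p q - u / s * (2 * s * τ)
      ≤ (u / s) ^ 2 * s ^ 2 - u / s * (2 * s * τ) := by gcongr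
    _ = u ^ 2 - 2 * u * τ := by field_simp
    _ ≤ -u * τ := by nlinarith
    _ = -(τ ^ 2) / (1 + τ) := by ring

end BernoulliSum

lemma one_sub_card_mul_le_measureReal_forall {Ω ι : Type*} [MeasurableSpace Ω] [Fintype ι]
    {μ : Measure Ω} [IsProbabilityMeasure μ] {P : ι → Ω → Prop} {b : ℝ}
    (h : ∀ i, μ.real {ω | ¬ P i ω} ≤ b) :
    1 - Fintype.card ι * b ≤ μ.real {ω | ∀ i, P i ω} := by
  set G := {ω | ∀ i, P i ω}
  have hcompl : Gᶜ = ⋃ i, {ω | ¬ P i ω} := by ext; simp [G]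
  have hcover := measureReal_union_le (μ := μ) G Gᶜ
  rw [Set.union_compl_self, probReal_univ] at hcover
  calc 1 - Fintype.card ι * b ≤ 1 - ∑ i, μ.real {ω | ¬ P i ω} := by
        gcongr; exact (sum_le_sum fun i _ => h i).trans_eq (by simp)
    _ ≤ 1 - μ.real Gᶜ := by rw [hcompl]; gcongr; exact measureReal_iUnion_fintype_le _
    _ ≤ μ.real G := by linarith

section Graph

variable {n : ℕ}

def incidentEdges (i : Fin n) : Finset {q : Fin n × Fin n // q.1 < q.2} :=
  {q | q.1.1 = i ∨ q.1.2 = i}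

lemma sum_incidentEdges {M : Matrix (Fin n) (Fin n) ℝ} (hM : M.IsSymm) (hdiag : ∀ i, M i i = 0)
    (i : Fin n) : ∑ q ∈ incidentEdges i, M q.1.1 q.1.2 = ∑ j, M i j := by
  rw [← sum_erase _ (hdiag i)]
  refine sum_bij (fun q _ => if q.1.1 = i then q.1.2 else q.1.1) ?_ ?_ ?_ ?_
  · intro q hq
    have := q.2
    simp only [incidentEdges, mem_filter, mem_univ, true_and] at hq
    split_ifs <;> simp only [mem_erase, mem_univ, and_true] <;> grind
  · intro q hq q' hq' h
    have := q.2; have := q'.2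
    simp only [incidentEdges, mem_filter, mem_univ, true_and] at hq hq'
    apply Subtype.ext
    split_ifs at h <;> ext <;> grind
  · intro j hj
    rcases lt_or_gt_of_ne (ne_of_mem_erase hj) with h | h
    · exact ⟨⟨(j, i), h⟩, by simp [incidentEdges], by simp [h.ne]⟩
    · exact ⟨⟨(i, j), h⟩, by simp [incidentEdges]⟩
  · intro q hq
    simp only [incidentEdges, mem_filter, mem_univ, true_and] at hq
    split_ifs with h
    · rw [h]
    · rw [hq.resolve_left h, ← hM.apply]

lemma hatA_isSymm (e : {q : Fin n × Fin n // q.1 < q.2} → Bool) : (hatA e).IsSymm := by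
  ext a b
  rcases lt_trichotomy a b with h | rfl | h <;> simp [hatA, *, not_lt_of_gt]

lemma hatA_apply_self (e : {q : Fin n × Fin n // q.1 < q.2} → Bool) (a : Fin n) :
    hatA e a a = 0 := by
  simp [hatA]

lemma hatA_apply_edge (e : {q : Fin n × Fin n // q.1 < q.2} → Bool)
    (q : {q : Fin n × Fin n // q.1 < q.2}) :
    hatA e q.1.1 q.1.2 = if e q then 1 else 0 := by
  simp [hatA, q.2]

lemma sum_hatA (e : {q : Fin n × Fin n // q.1 < q.2} → Bool) (i : Fin n) :
    ∑ j, hatA e i j = ∑ q ∈ incidentEdges i, if e q then 1 else 0 := by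
  simp only [← sum_incidentEdges (hatA_isSymm e) (hatA_apply_self e), hatA_apply_edge]

end Graph

section Degree

variable {n : ℕ} {A : Matrix (Fin n) (Fin n) ℝ} {γ : ℝ}

lemma mem_Icc_mul_edge (h01 : ∀ i j, A i j ∈ Set.Icc (0 : ℝ) 1) (hγ0 : 0 ≤ γ) (hγ1 : γ ≤ 1)
    (q : {q : Fin n × Fin n // q.1 < q.2}) : γ * A q.1.1 q.1.2 ∈ Set.Icc (0 : ℝ) 1 :=
  ⟨mul_nonneg hγ0 (h01 _ _).1, mul_le_one₀ hγ1 (h01 _ _).1 (h01 _ _).2⟩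

lemma isProbabilityMeasure_edgeMeasure (h01 : ∀ i j, A i j ∈ Set.Icc (0 : ℝ) 1) (hγ0 : 0 ≤ γ)
    (hγ1 : γ ≤ 1) : IsProbabilityMeasure (edgeMeasure A γ) := by
  have := fun q => isProbabilityMeasure_bern (mem_Icc_mul_edge h01 hγ0 hγ1 q).1
    (mem_Icc_mul_edge h01 hγ0 hγ1 q).2
  unfold edgeMeasure; infer_instance

lemma measureReal_not_abs_degree_sub_le (hsymm : A.IsSymm)
    (h01 : ∀ i j, A i j ∈ Set.Icc (0 : ℝ) 1) (hdiag : ∀ i, A i i = 0) (hγ0 : 0 < γ)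
    (hγ1 : γ ≤ 1) {s τ B : ℝ} (hs : 1 ≤ s) (hγn : γ * n ≤ s ^ 2) (hτ : 0 < τ)
    (hB : γ * B = 2 * s * τ) (i : Fin n) :
    (edgeMeasure A γ).real {e | ¬ |(∑ j, A i j) - (1 / γ) * ∑ j, hatA e i j| ≤ B}
      ≤ 2 * exp (-(τ ^ 2) / (1 + τ)) := by
  have := isProbabilityMeasure_edgeMeasure h01 hγ0.le hγ1
  have hμ : ∑ q ∈ incidentEdges i, γ * A q.1.1 q.1.2 = γ * ∑ j, A i j := by
    rw [← mul_sum, sum_incidentEdges hsymm hdiag]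
  have hscale (x : ℝ) : |∑ j, A i j - 1 / γ * x| = |x - γ * ∑ j, A i j| / γ := by
    rw [show ∑ j, A i j - 1 / γ * x = -(x - γ * ∑ j, A i j) / γ by field_simp; ring,
      abs_div, abs_neg, abs_of_pos hγ0]
  refine (measureReal_mono fun e he => ?_).trans
    (measureReal_two_mul_lt_abs_sum_bern_sub_le (mem_Icc_mul_edge h01 hγ0.le hγ1)
      (incidentEdges i) hs ?_ hτ)
  · simpa only [Set.mem_ofPred_eq, not_le, sum_hatA, hscale, lt_div_iff₀' hγ0, hB, hμ] using he
  · rw [hμ]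
    refine le_trans ?_ hγn
    gcongr
    exact (sum_le_sum fun j _ => (h01 i j).2).trans_eq (by simp)

end Degree

/-- Degree concentration under sparse edge subsampling: with probability at least
`1 − 2n·e^{−τ²/(1+τ)}`, every vertex satisfies
`|D_{ii} − (1/γ)·D̂_{ii}| ≤ 2·n^{1−α/2}·τ`. -/
theorem stmt13 (n : ℕ) (hn : 2 ≤ n) (α : ℝ) (hα1 : 1 / 2 < α) (hα2 : α ≤ 1)
    (γ : ℝ) (hγ : γ = (n : ℝ) ^ (α - 1))
    (A : Matrix (Fin n) (Fin n) ℝ) (hsymm : A.IsSymm)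
    (h01 : ∀ i j, A i j ∈ Set.Icc (0 : ℝ) 1) (hdiag : ∀ i, A i i = 0)
    (τ : ℝ) (hτ : 0 < τ) :
    ENNReal.ofReal (1 - 2 * n * Real.exp (-(τ ^ 2) / (1 + τ))) ≤
      edgeMeasure A γ
        {e | ∀ i : Fin n,
          |(∑ j, A i j) - (1 / γ) * ∑ j, hatA e i j| ≤ 2 * (n : ℝ) ^ (1 - α / 2) * τ} := by
  have hn1 : (1 : ℝ) ≤ n := by exact_mod_cast (by omega : 1 ≤ n)
  have hn0 : (0 : ℝ) < n := by linarith
  have hγ0 : 0 < γ := hγ ▸ rpow_pos_of_pos hn0 _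
  have hγ1 : γ ≤ 1 := hγ ▸ rpow_le_one_of_one_le_of_nonpos hn1 (by linarith)
  have hγB : γ * (2 * (n : ℝ) ^ (1 - α / 2) * τ) = 2 * (n : ℝ) ^ (α / 2) * τ := by
    rw [hγ, show (n : ℝ) ^ (α / 2) = n ^ (α - 1) * n ^ (1 - α / 2) by
      rw [← rpow_add hn0]; ring_nf]
    ring
  have hγn : γ * n = ((n : ℝ) ^ (α / 2)) ^ 2 := by
    rw [hγ, ← rpow_natCast, ← rpow_mul hn0.le, ← rpow_add_one hn0.ne']; ring_nf
  have := isProbabilityMeasure_edgeMeasure h01 hγ0.le hγ1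
  refine ENNReal.ofReal_le_of_le_toReal (Eq.trans_le ?_ (one_sub_card_mul_le_measureReal_forall
    (measureReal_not_abs_degree_sub_le hsymm h01 hdiag hγ0 hγ1
      (one_le_rpow hn1 (by linarith)) hγn.le hτ hγB)))
  rw [Fintype.card_fin]; ring
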